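/- For every integer k ≥ 1, the ℂ-dimension of the degree-k homogeneous component of the graded quotient ring R/I equals (9k³ + 27k)/6; that is, the ℂ-dimension of the quotient of the space of homogeneous polynomials of degree k in X₀,…,X₅ by its subspace of elements lying in I equals (3k³ + 9k)/2. In particular the Hilbert polynomial of R/I has leading coefficient 9/6 = 3/2. -/

import Mathlib

/-!
Since `f` is irreducible and does not divide `g`, the two cubics are relatively prime, so
`(f) ∩ (g) = (fg)`. Both ideals are homogeneous, so in each degree `n` the part of `(f, g)` is
the sum of the parts of `(f)` and `(g)`, whose intersection is the part of `(fg)`; and the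
degree-`n` part of a principal ideal `(h)`, with `h` homogeneous of degree `d`, is `h` times the
polynomials of degree `n - d`. With `dim R_m = C(m + 5, 5)` this gives
`dim (R/I)_k = C(k + 5, 5) - 2 C(k + 2, 5) + C(k - 1, 5)`, a cubic in `k` for `k ≥ 1`.
-/

open MvPolynomial

/-- The cubic `f = X₀X₁X₂ − X₃X₄X₅` in `ℂ[X₀,…,X₅]`. -/
noncomputable def cubicF : MvPolynomial (Fin 6) ℂ :=
  X 0 * X 1 * X 2 - X 3 * X 4 * X 5

/-- The cubic `g = X₀³ + X₁³ + X₂³ − X₃³ − X₄³ − X₅³` in `ℂ[X₀,…,X₅]`. -/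
noncomputable def cubicG : MvPolynomial (Fin 6) ℂ :=
  X 0 ^ 3 + X 1 ^ 3 + X 2 ^ 3 - X 3 ^ 3 - X 4 ^ 3 - X 5 ^ 3

/-- The ideal `I = (f, g)`. -/
noncomputable def cubicsIdeal : Ideal (MvPolynomial (Fin 6) ℂ) :=
  Ideal.span {cubicF, cubicG}

/-- The degree-`k` homogeneous component of the graded quotient ring `R/I`:
the space of homogeneous polynomials of degree `k` in `X₀,…,X₅` modulo its
subspace of elements lying in `I`. -/
noncomputable abbrev degreeComponent (k : ℕ) :=
  (homogeneousSubmodule (Fin 6) ℂ k) ⧸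
    (Submodule.comap (homogeneousSubmodule (Fin 6) ℂ k).subtype
      (cubicsIdeal.restrictScalars ℂ))

theorem Ideal.span_singleton_inf_span_singleton_of_isRelPrime {R : Type*} [CommSemiring R]
    [DecompositionMonoid R] {f g : R} (h : IsRelPrime f g) :
    Ideal.span {f} ⊓ Ideal.span {g} = Ideal.span {f * g} := by
  ext x
  simp only [Ideal.mem_inf, Ideal.mem_span_singleton]
  exact ⟨fun ⟨hf, hg⟩ => h.mul_dvd hf hg,
    fun hx => ⟨dvd_of_mul_right_dvd hx, dvd_of_mul_left_dvd hx⟩⟩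

namespace MvPolynomial

attribute [local instance] gradedAlgebra

theorem IsHomogeneous.homogeneousComponent_mul {σ R : Type*} [CommSemiring R]
    {f : MvPolynomial σ R} {d : ℕ} (hf : f.IsHomogeneous d) (a : MvPolynomial σ R) (n : ℕ) :
    homogeneousComponent n (f * a) = if d ≤ n then f * homogeneousComponent (n - d) a else 0 := by
  conv_lhs => rw [← sum_homogeneousComponent a, Finset.mul_sum, map_sum]
  have hterm (i : ℕ) : homogeneousComponent n (f * homogeneousComponent i a)
      = if n = d + i then f * homogeneousComponent i a else 0 :=
    homogeneousComponent_of_mem (hf.mul (homogeneousComponent_isHomogeneous i a))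
  simp only [hterm]
  split_ifs with hdn
  · rw [Finset.sum_eq_single (n - d) (fun i _ hi => if_neg (by omega)), if_pos (by omega)]
    intro hout
    rw [homogeneousComponent_eq_zero _ _ (by simp at hout; omega), mul_zero, ite_self]
  · exact Finset.sum_eq_zero fun i _ => if_neg (by omega)

theorem isRelPrime_X_X {σ R : Type*} [CommRing R] [IsDomain R] {i j : σ} (h : i ≠ j) :
    IsRelPrime (X i : MvPolynomial σ R) (X j) :=
  X_prime.irreducible.isRelPrime_iff_not_dvd.mpr (X_dvd_X.not.mpr h)

section DegreePart

variable {σ R : Type*} [CommSemiring R]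

noncomputable abbrev degreePart (I : Ideal (MvPolynomial σ R)) (n : ℕ) :
    Submodule R (homogeneousSubmodule σ R n) :=
  (I.restrictScalars R).comap (homogeneousSubmodule σ R n).subtype

theorem degreePart_sup {I J : Ideal (MvPolynomial σ R)}
    (hI : I.IsHomogeneous (homogeneousSubmodule σ R))
    (hJ : J.IsHomogeneous (homogeneousSubmodule σ R)) (n : ℕ) :
    degreePart (I ⊔ J) n = degreePart I n ⊔ degreePart J n := by
  refine le_antisymm (fun x hx => ?_)
    (sup_le (fun _ h => Ideal.mem_sup_left h) (fun _ h => Ideal.mem_sup_right h))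
  obtain ⟨i, hi, j, hj, hij⟩ := Submodule.mem_sup.mp hx
  have hx_eq : homogeneousComponent n i + homogeneousComponent n j = x := by
    rw [← map_add, hij, Submodule.subtype_apply, homogeneousComponent_of_mem x.2, if_pos rfl]
  exact Submodule.mem_sup.mpr ⟨⟨_, homogeneousComponent_mem n i⟩,
    homogeneousComponent_mem_of_mem hI hi n, ⟨_, homogeneousComponent_mem n j⟩,
    homogeneousComponent_mem_of_mem hJ hj n, Subtype.ext hx_eq⟩

end DegreePart

section Dimension

variable {σ K : Type*} [Field K]

instance [Finite σ] (n : ℕ) : Module.Finite K (homogeneousSubmodule σ K n) :=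
  Module.Finite.iff_fg.mpr (homogeneousSubmodule_fg σ K n)

theorem finrank_homogeneousSubmodule [Fintype σ] (n : ℕ) :
    Module.finrank K (homogeneousSubmodule σ K n) = (Fintype.card σ + n - 1).choose n := by
  classical
  let b := (basisRestrictSupport K {d : σ →₀ ℕ | d.degree = n}).map
    (LinearEquiv.ofEq _ _ (homogeneousSubmodule_eq_finsupp_supported σ K n).symm)
  have e : Sym σ n ≃ {d : σ →₀ ℕ | d.degree = n} := Sym.equivNatSum σ n
  rw [Module.finrank_eq_nat_card_basis b, ← Nat.card_congr e, Nat.card_eq_fintype_card,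
    Sym.card_sym_eq_choose]

theorem finrank_homogeneousSubmodule_fin (r n : ℕ) :
    Module.finrank K (homogeneousSubmodule (Fin (r + 1)) K n) = (n + r).choose r := by
  rw [finrank_homogeneousSubmodule, Fintype.card_fin, show r + 1 + n - 1 = n + r by omega,
    Nat.choose_symm_add]

variable [Finite σ] {f g : MvPolynomial σ K} {d e : ℕ}

theorem IsHomogeneous.finrank_degreePart_span_singleton (hf : f.IsHomogeneous d) (hf0 : f ≠ 0)
    (n : ℕ) : Module.finrank K (degreePart (Ideal.span {f}) n) =
      if d ≤ n then Module.finrank K (homogeneousSubmodule σ K (n - d)) else 0 := by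
  split_ifs with hdn
  · let mulF : homogeneousSubmodule σ K (n - d) →ₗ[K] homogeneousSubmodule σ K n :=
      LinearMap.codRestrict _ ((LinearMap.mulLeft K f).comp (Submodule.subtype _))
        fun a => by simpa [Nat.add_sub_cancel' hdn] using hf.mul a.2
    have hrange : LinearMap.range mulF = degreePart (Ideal.span {f}) n := by
      ext x
      refine ⟨fun ⟨a, ha⟩ => ha ▸ Ideal.mul_mem_right _ _ (Ideal.mem_span_singleton_self f),
        fun hx => ?_⟩
      obtain ⟨c, hc : (x : MvPolynomial σ K) = f * c⟩ := Ideal.mem_span_singleton.mp hx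
      refine ⟨⟨_, homogeneousComponent_mem (n - d) c⟩, Subtype.ext ?_⟩
      have := hf.homogeneousComponent_mul c n
      rw [if_pos hdn, ← hc, homogeneousComponent_of_mem x.2, if_pos rfl] at this
      exact this.symm
    have hinj : Function.Injective mulF := fun a b hab =>
      Subtype.ext (mul_left_cancel₀ hf0 (congrArg Subtype.val hab))
    rw [← hrange, LinearMap.finrank_range_of_inj hinj]
  · rw [Submodule.finrank_eq_zero, Submodule.eq_bot_iff]
    intro x hx
    obtain ⟨c, hc : (x : MvPolynomial σ K) = f * c⟩ := Ideal.mem_span_singleton.mp hx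
    have := hf.homogeneousComponent_mul c n
    rw [if_neg hdn, ← hc, homogeneousComponent_of_mem x.2, if_pos rfl] at this
    exact Subtype.ext this

theorem IsHomogeneous.finrank_degreePart_span_singleton_fin {r : ℕ} (hr : 0 < r)
    {f : MvPolynomial (Fin (r + 1)) K} (hf : f.IsHomogeneous d) (hf0 : f ≠ 0) (n : ℕ) :
    Module.finrank K (degreePart (Ideal.span {f}) n) = (n + r - d).choose r := by
  -- for `n < d` the truncated subtraction leaves `n + r - d < r`, so the binomial vanishes
  rw [hf.finrank_degreePart_span_singleton hf0, finrank_homogeneousSubmodule_fin]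
  split_ifs with hdn
  · rw [show n + r - d = n - d + r by omega]
  · exact (Nat.choose_eq_zero_of_lt (by omega)).symm

theorem finrank_quotient_degreePart_span_pair (hf : f.IsHomogeneous d) (hg : g.IsHomogeneous e)
    (hfg : IsRelPrime f g) (n : ℕ) :
    Module.finrank K (homogeneousSubmodule σ K n ⧸ degreePart (Ideal.span {f, g}) n)
        + Module.finrank K (degreePart (Ideal.span {f}) n)
        + Module.finrank K (degreePart (Ideal.span {g}) n)
      = Module.finrank K (homogeneousSubmodule σ K n)
        + Module.finrank K (degreePart (Ideal.span {f * g}) n) := by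
  have hsup : degreePart (Ideal.span {f, g}) n
      = degreePart (Ideal.span {f}) n ⊔ degreePart (Ideal.span {g}) n := by
    rw [Ideal.span_insert, degreePart_sup (Ideal.homogeneous_span _ _ (by simpa using ⟨d, hf⟩))
      (Ideal.homogeneous_span _ _ (by simpa using ⟨e, hg⟩))]
  have hinf : degreePart (Ideal.span {f}) n ⊓ degreePart (Ideal.span {g}) n
      = degreePart (Ideal.span {f * g}) n := by
    rw [← Ideal.span_singleton_inf_span_singleton_of_isRelPrime hfg]
    rfl
  have hquot := Submodule.finrank_quotient_add_finrank (degreePart (Ideal.span {f, g}) n)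
  have hsum := Submodule.finrank_sup_add_finrank_inf_eq (degreePart (Ideal.span {f}) n)
    (degreePart (Ideal.span {g}) n)
  rw [hsup] at hquot ⊢
  rw [hinf] at hsum
  omega

end Dimension

end MvPolynomial

theorem Nat.cast_choose_five_mul {R : Type*} [CommRing R] (m : ℕ) :
    (120 * m.choose 5 : R) = m * (m - 1) * (m - 2) * (m - 3) * (m - 4) := by
  have h := descPochhammer_eval_eq_descFactorial R m 5
  rw [Nat.descFactorial_eq_factorial_mul_choose] at h
  simp [descPochhammer_succ_right, Nat.factorial] at h
  linear_combination -h

theorem choose_five_identity (k : ℕ) (hk : 1 ≤ k) :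
    2 * (k + 5).choose 5 + 2 * (k - 1).choose 5 = 4 * (k + 2).choose 5 + 3 * k ^ 3 + 9 * k := by
  obtain ⟨j, rfl⟩ : ∃ j, k = j + 1 := ⟨k - 1, by omega⟩
  have h6 := Nat.cast_choose_five_mul (R := ℚ) (j + 1 + 5)
  have h3 := Nat.cast_choose_five_mul (R := ℚ) (j + 1 + 2)
  have h0 := Nat.cast_choose_five_mul (R := ℚ) j
  rw [Nat.add_sub_cancel]
  push_cast at h6 h3
  have : (2 * (j + 1 + 5).choose 5 + 2 * j.choose 5 : ℚ)
      = 4 * (j + 1 + 2).choose 5 + 3 * (j + 1) ^ 3 + 9 * (j + 1) := by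
    linear_combination (h6 + h0 - 2 * h3) / 60
  exact_mod_cast this

theorem isHomogeneous_cubicF : cubicF.IsHomogeneous 3 :=
  (((isHomogeneous_X ℂ 0).mul (isHomogeneous_X ℂ 1)).mul (isHomogeneous_X ℂ 2)).sub
    (((isHomogeneous_X ℂ 3).mul (isHomogeneous_X ℂ 4)).mul (isHomogeneous_X ℂ 5))

theorem isHomogeneous_cubicG : cubicG.IsHomogeneous 3 := by
  have h (i : Fin 6) : ((X i : MvPolynomial (Fin 6) ℂ) ^ 3).IsHomogeneous 3 := by
    simpa using (isHomogeneous_X ℂ i).pow 3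
  exact (((((h 0).add (h 1)).add (h 2)).sub (h 3)).sub (h 4)).sub (h 5)

-- `finSuccEquiv` makes `X₀` the polynomial variable and renames `Xᵢ₊₁` to `Xᵢ`.
theorem finSuccEquiv_cubicF : finSuccEquiv ℂ 5 cubicF
    = Polynomial.C (X 0 * X 1) * Polynomial.X + Polynomial.C (-(X 2 * X 3 * X 4)) := by
  rw [cubicF, map_sub, map_mul, map_mul, map_mul, map_mul, finSuccEquiv_X_zero,
    show (1 : Fin 6) = Fin.succ 0 from rfl, show (2 : Fin 6) = Fin.succ 1 from rfl,
    show (3 : Fin 6) = Fin.succ 2 from rfl, show (4 : Fin 6) = Fin.succ 3 from rfl,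
    show (5 : Fin 6) = Fin.succ 4 from rfl]
  simp only [finSuccEquiv_X_succ, map_mul, map_neg]
  ring

theorem irreducible_cubicF : Irreducible cubicF := by
  rw [← MulEquiv.irreducible_iff (finSuccEquiv ℂ 5), finSuccEquiv_cubicF]
  refine Polynomial.irreducible_C_mul_X_add_C (mul_ne_zero (X_ne_zero 0) (X_ne_zero 1)) ?_
  have hX {i j : Fin 5} (h : i ≠ j := by decide) :
      IsRelPrime (X i : MvPolynomial (Fin 5) ℂ) (X j) :=
    isRelPrime_X_X h
  exact .neg_right <| .mul_left (.mul_right (.mul_right hX hX) hX)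
    (.mul_right (.mul_right hX hX) hX)

theorem cubicF_not_dvd_cubicG : ¬ cubicF ∣ cubicG := by
  rintro ⟨c, hc⟩
  have := congrArg (eval ![1, 1, 0, 0, 0, 0]) hc
  simp [cubicF, cubicG] at this

theorem dim_degree_component (k : ℕ) (hk : 1 ≤ k) :
    2 * Module.finrank ℂ (degreeComponent k) = 3 * k ^ 3 + 9 * k := by
  have hF0 : cubicF ≠ 0 := irreducible_cubicF.ne_zero
  have hG0 : cubicG ≠ 0 := fun h => cubicF_not_dvd_cubicG (h ▸ dvd_zero _)
  have key := finrank_quotient_degreePart_span_pair isHomogeneous_cubicF isHomogeneous_cubicG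
    (irreducible_cubicF.isRelPrime_iff_not_dvd.mpr cubicF_not_dvd_cubicG) k
  rw [isHomogeneous_cubicF.finrank_degreePart_span_singleton_fin (by norm_num) hF0,
    isHomogeneous_cubicG.finrank_degreePart_span_singleton_fin (by norm_num) hG0,
    (isHomogeneous_cubicF.mul isHomogeneous_cubicG).finrank_degreePart_span_singleton_fin
      (by norm_num) (mul_ne_zero hF0 hG0),
    finrank_homogeneousSubmodule_fin, show k + 5 - 3 = k + 2 by omega,
    show k + 5 - (3 + 3) = k - 1 by omega] at key
  have hquot : Module.finrank ℂ (degreeComponent k) = Module.finrank ℂ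
      (homogeneousSubmodule (Fin 6) ℂ k ⧸ degreePart (Ideal.span {cubicF, cubicG}) k) := rfl
  have := choose_five_identity k hk
  omega
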